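/- If h ≥ 1 and k ≥ 0 are integers, then the wall of height (h+1)·⌈(k+1)^{1/2}⌉ contains k + 1 pairwise vertex-disjoint subgraphs each of which contains a wall of height h as a subgraph (up to isomorphism). -/

import Mathlib

open scoped Classical

/-- A finite loopless multigraph: `E` indexes edges, `ends e` gives the endpoints. -/
structure Multigraph (V : Type) (E : Type) where
  ends : E → Sym2 V
  loopless : ∀ e, ¬ (ends e).IsDiag

namespace Multigraph

variable {V E V1 E1 V2 E2 : Type}

/-- Multidegree: number of edges (with multiplicity) incident with `v`. -/
noncomputable def mdeg (G : Multigraph V E) [Fintype E] (v : V) : ℕ :=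
  (Finset.univ.filter (fun e => v ∈ G.ends e)).card

/-- Walks in a multigraph, remembering which edge instance is used at each step. -/
inductive Walk (G : Multigraph V E) : V → V → Type where
  | nil (v : V) : Walk G v v
  | cons {u v w : V} (e : E) (he : G.ends e = s(u, v)) (p : Walk G v w) : Walk G u w

namespace Walk

variable {G : Multigraph V E}

def support : {u v : V} → G.Walk u v → List V
  | u, _, .nil _ => [u]
  | u, _, .cons _ _ p => u :: p.support

def edges : {u v : V} → G.Walk u v → List E
  | _, _, .nil _ => []
  | _, _, .cons e _ p => e :: p.edges

/-- A walk is a path when its vertices are pairwise distinct. -/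
def IsPath {u v : V} (p : G.Walk u v) : Prop := p.support.Nodup

/-- The internal vertices of a walk (all vertices except the two endpoints). -/
def interior {u v : V} (p : G.Walk u v) : List V := p.support.tail.dropLast

end Walk

/-- An `H`-immersion model in `G`. -/
structure ImmersionModel (H : Multigraph V1 E1) (G : Multigraph V E) where
  vmap : V1 → V
  vmap_inj : Function.Injective vmap
  src : E1 → V1
  tgt : E1 → V1
  ends_eq : ∀ e, H.ends e = s(src e, tgt e)
  path : ∀ e, G.Walk (vmap (src e)) (vmap (tgt e))
  path_isPath : ∀ e, (path e).IsPath
  edge_disjoint : ∀ e₁ e₂, e₁ ≠ e₂ → ∀ x, x ∈ (path e₁).edges → x ∉ (path e₂).edges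

namespace ImmersionModel

variable {H : Multigraph V1 E1} {G : Multigraph V E}

/-- The edges of the immersion expansion associated with the model. -/
def edgeSet (m : ImmersionModel H G) : Set E := {x | ∃ e, x ∈ (m.path e).edges}

/-- The vertices of the immersion expansion associated with the model. -/
def vertSet (m : ImmersionModel H G) : Set V :=
  {x | (∃ a, m.vmap a = x) ∨ ∃ e, x ∈ (m.path e).support}

end ImmersionModel

/-- `G` contains `H` as an immersion. -/
def Immersed (H : Multigraph V1 E1) (G : Multigraph V E) : Prop :=
  Nonempty (ImmersionModel H G)

/-- Deleting a set of edges from a multigraph. -/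
def deleteEdges (G : Multigraph V E) (F : Set E) : Multigraph V {e : E // e ∉ F} where
  ends e := G.ends e.1
  loopless e := G.loopless e.1

/-- The minimum size of an `H`-cover of `G`: a set of edges meeting every
`H`-immersion expansion. (By convention `sInf ∅ = 0`.) -/
noncomputable def coverNum (H : Multigraph V1 E1) (G : Multigraph V E) : ℕ :=
  sInf {n | ∃ C : Finset E, ¬ Immersed H (G.deleteEdges ↑C) ∧ C.card = n}

/-- The maximum size of an `H`-packing in `G`: a collection of pairwise
edge-disjoint `H`-immersion expansions. -/
noncomputable def packNum (H : Multigraph V1 E1) (G : Multigraph V E) : ℕ :=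
  sSup {n | ∃ f : Fin n → ImmersionModel H G,
    ∀ i j, i ≠ j → Disjoint (f i).edgeSet (f j).edgeSet}

/-- Connectivity of a multigraph. -/
def Connected (G : Multigraph V E) : Prop :=
  Nonempty V ∧ ∀ u v : V, Nonempty (G.Walk u v)

/-- Reachability in `G` avoiding the vertex set `X`. -/
def ReachAvoid (G : Multigraph V E) (X : Set V) (u v : V) : Prop :=
  ∃ p : G.Walk u v, ∀ x ∈ p.support, x ∉ X

/-- The underlying simple graph of a multigraph. -/
def toSimple (G : Multigraph V E) : SimpleGraph V where
  Adj u v := u ≠ v ∧ ∃ e, G.ends e = s(u, v)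
  symm := by
    constructor
    rintro u v ⟨h, e, he⟩
    exact ⟨h.symm, e, by rw [he, Sym2.eq_swap]⟩
  loopless := ⟨fun v h => h.1 rfl⟩

end Multigraph

section Minor

/-- `A` is a minor of `B` (branch-set/minor-model definition). -/
def SimpleGraphMinorOf {α β : Type} (A : SimpleGraph α) (B : SimpleGraph β) : Prop :=
  ∃ C : α → Set β,
    (∀ a, (C a).Nonempty) ∧
    (∀ a, (B.induce (C a)).Connected) ∧
    (Pairwise fun a a' => Disjoint (C a) (C a')) ∧
    (∀ a a', A.Adj a a' → ∃ x ∈ C a, ∃ y ∈ C a', B.Adj x y)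

end Minor

namespace Multigraph

variable {V E : Type}

/-- Planarity of a loopless multigraph, via Wagner's theorem: no `K₅` and
no `K₃,₃` minor in the underlying simple graph. -/
def Planar (G : Multigraph V E) : Prop :=
  ¬ SimpleGraphMinorOf (SimpleGraph.completeGraph (Fin 5)) G.toSimple ∧
  ¬ SimpleGraphMinorOf (completeBipartiteGraph (Fin 3) (Fin 3)) G.toSimple

lemma isDiag_map_inl {α β : Type} (p : Sym2 α) :
    (p.map (Sum.inl : α → α ⊕ β)).IsDiag ↔ p.IsDiag := by
  induction p using Sym2.ind with
  | _ a b => simp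

/-- `G⁺`: attach to every vertex `v` a gadget of two new vertices `(v,false)`,
`(v,true)` joined by a double edge, each joined to `v` by a single edge. -/
def plus (G : Multigraph V E) :
    Multigraph (V ⊕ (V × Bool)) (E ⊕ ((V × Fin 2) ⊕ (V × Bool))) where
  ends
    | .inl e => (G.ends e).map .inl
    | .inr (.inl (v, _)) => s(.inr (v, false), .inr (v, true))
    | .inr (.inr (v, b)) => s(.inl v, .inr (v, b))
  loopless := by
    rintro (e | ⟨v, i⟩ | ⟨v, b⟩) h
    · exact G.loopless e ((isDiag_map_inl _).1 h)
    · simp at h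
    · simp at h

/-- `G*`: attach, at every vertex `v` and for every `i ∈ {1,…,mdeg v}`, a gadget of two
new vertices joined by a double edge, each joined to `v` by a single edge. -/
noncomputable def star (G : Multigraph V E) [Fintype E] :
    Multigraph (V ⊕ ((Σ v : V, Fin (G.mdeg v)) × Bool))
      (E ⊕ (((Σ v : V, Fin (G.mdeg v)) × Fin 2) ⊕ ((Σ v : V, Fin (G.mdeg v)) × Bool))) where
  ends
    | .inl e => (G.ends e).map .inl
    | .inr (.inl (p, _)) => s(.inr (p, false), .inr (p, true))
    | .inr (.inr (p, b)) => s(.inl p.1, .inr (p, b))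
  loopless := by
    rintro (e | ⟨p, i⟩ | ⟨p, b⟩) h
    · exact G.loopless e ((isDiag_map_inl _).1 h)
    · simp at h
    · simp at h

/-- The subdivision of `G` in which the edge `e` (oriented from `src e` to `tgt e`)
is subdivided `n e` times, i.e. replaced by a path with `n e` internal vertices. -/
def subdivide (G : Multigraph V E) (src tgt : E → V)
    (hst : ∀ e, G.ends e = s(src e, tgt e)) (n : E → ℕ) :
    Multigraph (V ⊕ (Σ e : E, Fin (n e))) (Σ e : E, Fin (n e + 1)) where
  ends := fun q =>
    s(if _ : q.2.val = 0 then Sum.inl (src q.1)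
        else Sum.inr ⟨q.1, ⟨q.2.val - 1, by have := q.2.isLt; omega⟩⟩,
      if _ : q.2.val = n q.1 then Sum.inl (tgt q.1)
        else Sum.inr ⟨q.1, ⟨q.2.val, by have := q.2.isLt; omega⟩⟩)
  loopless := by
    rintro ⟨e, i⟩ h
    rw [Sym2.mk_isDiag_iff] at h
    split_ifs at h with h1 h2 h2 <;>
      first
        | exact Sum.noConfusion h
        | (have hl := G.loopless e
           rw [hst e, Sym2.mk_isDiag_iff] at hl
           exact hl (Sum.inl.inj h))
        | (have h3 := Sum.inr.inj h
           dsimp only at h1 h3 ⊢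
           simp at h1 h3 <;> omega)

end Multigraph

namespace Multigraph

/-- The multigraph underlying a simple graph. -/
def ofSimple {α : Type} (S : SimpleGraph α) : Multigraph α S.edgeSet where
  ends e := e.1
  loopless e := S.not_isDiag_of_mem_edgeSet e.2

/-- A strong immersion model: additionally, no branch vertex is an internal
vertex of a certifying path. -/
structure StrongImmersionModel {V1 E1 V E : Type} (H : Multigraph V1 E1) (G : Multigraph V E)
    extends ImmersionModel H G where
  not_internal : ∀ (e : E1) (x : V1), vmap x ∉ (path e).interior

/-- An `H`-topological-minor model in `G`: certifying paths are internally
vertex-disjoint and their internal vertices avoid the branch vertices. -/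
structure TopMinorModel {V1 E1 V E : Type} (H : Multigraph V1 E1) (G : Multigraph V E) where
  vmap : V1 → V
  vmap_inj : Function.Injective vmap
  src : E1 → V1
  tgt : E1 → V1
  ends_eq : ∀ e, H.ends e = s(src e, tgt e)
  path : ∀ e, G.Walk (vmap (src e)) (vmap (tgt e))
  path_isPath : ∀ e, (path e).IsPath
  internal_disjoint : ∀ e₁ e₂, e₁ ≠ e₂ → ∀ x, x ∈ (path e₁).interior → x ∉ (path e₂).support
  internal_avoid : ∀ (e : E1) (x : V1), vmap x ∉ (path e).interior

end Multigraph

section Walls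

/-- The `m × n` grid graph. -/
def gridGraph (m n : ℕ) : SimpleGraph (Fin m × Fin n) where
  Adj p q := (p.1 = q.1 ∧ (p.2.val + 1 = q.2.val ∨ q.2.val + 1 = p.2.val)) ∨
             (p.2 = q.2 ∧ (p.1.val + 1 = q.1.val ∨ q.1.val + 1 = p.1.val))
  symm := by constructor; rintro p q (⟨h, h'⟩ | ⟨h, h'⟩) <;> [left; right] <;> exact ⟨h.symm, h'.symm⟩
  loopless := by constructor; rintro p (⟨-, h | h⟩ | ⟨-, h | h⟩) <;> omega

/-- The `k×k` grid `Γ_k` as a multigraph. -/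
def Gamma (k : ℕ) : Multigraph (Fin k × Fin k) (gridGraph k k).edgeSet :=
  Multigraph.ofSimple (gridGraph k k)

/-- The `(k+1) × (2k+2)` grid with the vertical edges `{(x,y),(x+1,y)}` with `x+y` odd
(in 1-indexed coordinates) removed. -/
def wallPre (k : ℕ) : SimpleGraph (Fin (k + 1) × Fin (2 * k + 2)) where
  Adj p q := (gridGraph (k + 1) (2 * k + 2)).Adj p q ∧
    ¬ (p.2 = q.2 ∧ (min p.1.val q.1.val + p.2.val) % 2 = 1)
  symm := by
    constructor
    rintro p q ⟨h, h'⟩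
    refine ⟨(gridGraph _ _).symm.symm _ _ h, fun ⟨hc, hp⟩ => h' ⟨hc.symm, ?_⟩⟩
    rw [Nat.min_comm] at hp
    rw [← hc]
    exact hp
  loopless := ⟨fun p h => (gridGraph _ _).loopless.irrefl p h.1⟩

/-- Degree of a vertex in `wallPre k`. -/
noncomputable def wallPreDeg (k : ℕ) (v : Fin (k + 1) × Fin (2 * k + 2)) : ℕ :=
  (Finset.univ.filter (fun w => (wallPre k).Adj v w)).card

/-- The vertex set of the `k`-wall: vertices of degree `≠ 1`. -/
def wallVerts (k : ℕ) : Set (Fin (k + 1) × Fin (2 * k + 2)) :=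
  {v | wallPreDeg k v ≠ 1}

/-- The `k`-wall `W_k`, as a simple graph. -/
noncomputable def wallSimple (k : ℕ) : SimpleGraph (wallVerts k) :=
  (wallPre k).induce (wallVerts k)

/-- The `k`-wall `W_k`, as a multigraph. -/
noncomputable def Wall (k : ℕ) : Multigraph (wallVerts k) (wallSimple k).edgeSet :=
  Multigraph.ofSimple (wallSimple k)

/-- The doubled edges of `W⁺_k`: the horizontal edges lying on both a vertical and a
horizontal path of the wall, i.e. those whose lower column index is odd (1-indexed). -/
def isDoubledEdge (k : ℕ) (p : Sym2 (wallVerts k)) : Prop :=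
  ∃ a b : wallVerts k, p = s(a, b) ∧ (a : Fin (k + 1) × Fin (2 * k + 2)).1 = (b : Fin (k + 1) × Fin (2 * k + 2)).1 ∧
    (b : Fin (k + 1) × Fin (2 * k + 2)).2.val = (a : Fin (k + 1) × Fin (2 * k + 2)).2.val + 1 ∧
    (a : Fin (k + 1) × Fin (2 * k + 2)).2.val % 2 = 0

/-- `W⁺_k`: the `k`-wall with a second parallel copy of every doubled edge. -/
noncomputable def WallPlus (k : ℕ) :
    Multigraph (wallVerts k)
      ((wallSimple k).edgeSet ⊕ {p : Sym2 (wallVerts k) // p ∈ (wallSimple k).edgeSet ∧ isDoubledEdge k p}) where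
  ends
    | .inl e => e.1
    | .inr e => e.1
  loopless := by
    rintro (e | e)
    · exact (wallSimple k).not_isDiag_of_mem_edgeSet e.2
    · exact (wallSimple k).not_isDiag_of_mem_edgeSet e.2.1

end Walls

namespace Multigraph

variable {V E : Type}

/-- Tree-partition width of a multigraph (bags may be empty; w.l.o.g. bags are
indexed by the vertices themselves). -/
noncomputable def tpw (G : Multigraph V E) [Fintype V] [Fintype E] : ℕ :=
  sInf {w | ∃ T : SimpleGraph V, T.IsTree ∧ ∃ bag : V → V,
    (Fintype.card V = 1 ∨
      ∀ (e : E) (a b : V), G.ends e = s(a, b) → bag a = bag b ∨ T.Adj (bag a) (bag b)) ∧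
    (∀ t : V, (Finset.univ.filter (fun v => bag v = t)).card ≤ w) ∧
    (∀ t t' : V, T.Adj t t' →
      (Finset.univ.filter (fun e : E =>
        ∃ a b, G.ends e = s(a, b) ∧ bag a = t ∧ bag b = t')).card ≤ w)}

section ThreeCenter

variable {W : Type} [Fintype W]

/-- Degree of `v` in the state `(A, m)`: `A` is the set of remaining vertices and
`m` gives edge multiplicities. -/
noncomputable def stDeg (A : Finset W) (m : Sym2 W → ℕ) (v : W) : ℕ :=
  ∑ w ∈ A.erase v, m s(v, w)

/-- One reduction step of the 3-center construction relative to the marked set `X`: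
delete a vertex of degree one, or suppress (dissolve) a vertex of degree two not in `X`. -/
inductive CStep (X : Set W) :
    Finset W × (Sym2 W → ℕ) → Finset W × (Sym2 W → ℕ) → Prop
  | delete (A : Finset W) (m : Sym2 W → ℕ) (v : W) (hv : v ∈ A) (hd : stDeg A m v = 1) :
      CStep X (A, m) (A.erase v, fun p => if v ∈ p then 0 else m p)
  | suppress (A : Finset W) (m : Sym2 W → ℕ) (v a b : W) (hv : v ∈ A) (hx : v ∉ X)
      (ha : a ∈ A) (hb : b ∈ A) (hav : a ≠ v) (hbv : b ≠ v) (hd : stDeg A m v = 2)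
      (h1 : 1 ≤ m s(v, a)) (h2 : a = b → m s(v, a) = 2) (h3 : a ≠ b → 1 ≤ m s(v, b)) :
      CStep X (A, m) (A.erase v,
        fun p => if v ∈ p then 0 else if a ≠ b ∧ p = s(a, b) then m p + 1 else m p)

/-- The number of vertices of the 3-center of the marked multigraph given by the
state `(A, m)` with marked set `X`: the size of a reduct on which no step applies. -/
noncomputable def centerSize (X : Set W) (A : Finset W) (m : Sym2 W → ℕ) : ℕ :=
  sInf {c | ∃ s : Finset W × (Sym2 W → ℕ),
    Relation.ReflTransGen (CStep X) (A, m) s ∧ (∀ s', ¬ CStep X s s') ∧ s.1.card = c}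

end ThreeCenter

section TCW

variable {n : ℕ}

/-- The consolidation map for the torso at node `t` of a tree-cut decomposition:
a vertex whose bag is `t` is kept, and any other vertex is sent to the peripheral
vertex indexed by the neighbour `u` of `t` whose branch contains its bag. -/
noncomputable def consMap (T : SimpleGraph (Fin n)) (bag : V → Fin n) (t : Fin n) (a : V) :
    V ⊕ Fin n :=
  if bag a = t then Sum.inl a
  else if h : ∃ u, T.Adj t u ∧ (T.deleteEdges {s(t, u)}).Reachable (bag a) u
    then Sum.inr h.choose else Sum.inl a

/-- The vertex set of the torso at `t`: the bag of `t` together with one peripheral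
vertex for each neighbour of `t` in the decomposition tree. -/
noncomputable def torsoA [Fintype V] (T : SimpleGraph (Fin n)) (bag : V → Fin n) (t : Fin n) :
    Finset (V ⊕ Fin n) :=
  (Finset.univ.filter (fun a : V => bag a = t)).image Sum.inl ∪
    (Finset.univ.filter (fun u : Fin n => T.Adj t u)).image Sum.inr

/-- The edge multiplicities of the torso at `t`. -/
noncomputable def torsoM (G : Multigraph V E) [Fintype E] (T : SimpleGraph (Fin n))
    (bag : V → Fin n) (t : Fin n) : Sym2 (V ⊕ Fin n) → ℕ :=
  fun p => if p.IsDiag then 0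
    else (Finset.univ.filter (fun e : E => (G.ends e).map (consMap T bag t) = p)).card

/-- The adhesion of the tree edge `{t, t'}`: the number of edges of `G` whose endpoints
lie in bags on different sides of the edge. -/
noncomputable def adhE (G : Multigraph V E) [Fintype E] (T : SimpleGraph (Fin n))
    (bag : V → Fin n) (t t' : Fin n) : ℕ :=
  (Finset.univ.filter (fun e : E => ∃ a b, G.ends e = s(a, b) ∧
    (T.deleteEdges {s(t, t')}).Reachable (bag a) t ∧
    (T.deleteEdges {s(t, t')}).Reachable (bag b) t')).card

/-- Tree-cut width of a multigraph: the minimum, over tree-cut decompositions, of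
the maximum of all adhesions and of the numbers of vertices of the 3-centers
of the torsos. -/
noncomputable def tcw (G : Multigraph V E) [Fintype V] [Fintype E] : ℕ :=
  sInf {w | ∃ (n : ℕ) (T : SimpleGraph (Fin n)), T.IsTree ∧ ∃ bag : V → Fin n,
    (∀ t t', T.Adj t t' → adhE G T bag t t' ≤ w) ∧
    (∀ t, centerSize (Sum.inl '' {a | bag a = t}) (torsoA T bag t) (torsoM G T bag t) ≤ w)}

end TCW

end Multigraph

/-! The removed vertical edges of a wall follow a parity pattern, so translating the
`(h+1) × (2h+2)` grid of `W_h` by `a` rows and `b` columns with `a ≡ b (mod 2)` embeds it into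
the grid of any larger wall. Every grid vertex has a horizontal neighbour and degrees can only
grow under an embedding, so vertices of degree `≠ 1` (the wall vertices) go to wall vertices.
Tiling `W_{(h+1)s}` by an `s × s` array of such translates, `k + 1 ≤ s²` of them give the
disjoint copies. -/

theorem SimpleGraph.card_filter_adj_le_of_injective {V W : Type*} [Fintype V] [Fintype W]
    {G : SimpleGraph V} {G' : SimpleGraph W} (φ : G →g G') (hφ : Function.Injective φ) (v : V) :
    (Finset.univ.filter (fun w => G.Adj v w)).card ≤
      (Finset.univ.filter (fun w => G'.Adj (φ v) w)).card :=
  Finset.card_le_card_of_injOn φ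
    (fun w hw => by simpa using φ.map_adj (by simpa using hw)) hφ.injOn

theorem Nat.eq_of_add_mul_eq_add_mul {c u v x y : ℕ} (hu : u < c) (hv : v < c)
    (h : u + x * c = v + y * c) : x = y := by
  have hc : 0 < c := by omega
  have := congrArg (· / c) h
  simpa [Nat.add_mul_div_right _ _ hc, Nat.div_eq_of_lt hu, Nat.div_eq_of_lt hv] using this

theorem le_ceil_sqrt_mul_self (n : ℕ) :
    n ≤ (if Nat.sqrt n * Nat.sqrt n = n then Nat.sqrt n else Nat.sqrt n + 1) *
      (if Nat.sqrt n * Nat.sqrt n = n then Nat.sqrt n else Nat.sqrt n + 1) := by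
  split_ifs with hsq
  · exact hsq.ge
  · exact (Nat.lt_succ_sqrt n).le

theorem wallPreDeg_pos (k : ℕ) (v : Fin (k + 1) × Fin (2 * k + 2)) : 0 < wallPreDeg k v := by
  obtain ⟨w, hw⟩ : ∃ w, (wallPre k).Adj v w := by
    by_cases hv : v.2.val = 0
    · refine ⟨(v.1, ⟨1, by omega⟩), ?_⟩
      simp only [wallPre, gridGraph, Fin.ext_iff, true_and]
      omega
    · refine ⟨(v.1, ⟨v.2.val - 1, by omega⟩), ?_⟩
      simp only [wallPre, gridGraph, Fin.ext_iff, true_and]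
      omega
  exact Finset.card_pos.2 ⟨w, by simpa using hw⟩

theorem mapsTo_wallVerts {h R : ℕ} (φ : wallPre h ↪g wallPre R) :
    Set.MapsTo φ (wallVerts h) (wallVerts R) := fun v hv => by
  have hle : wallPreDeg h v ≤ wallPreDeg R (φ v) :=
    SimpleGraph.card_filter_adj_le_of_injective φ.toHom φ.injective v
  have hpos := wallPreDeg_pos h v
  have hv' : wallPreDeg h v ≠ 1 := hv
  show wallPreDeg R (φ v) ≠ 1
  omega

def wallPreShift {h R : ℕ} (a b : ℕ) (ha : a + h ≤ R) (hb : b + 2 * h ≤ 2 * R)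
    (hab : a % 2 = b % 2) : wallPre h ↪g wallPre R where
  toFun v := (⟨v.1 + a, by omega⟩, ⟨v.2 + b, by omega⟩)
  inj' v w hvw := by
    simp only [Prod.mk.injEq, Fin.ext_iff] at hvw
    ext <;> omega
  map_rel_iff' {v w} := by
    change (wallPre R).Adj (⟨v.1 + a, _⟩, ⟨v.2 + b, _⟩) (⟨w.1 + a, _⟩, ⟨w.2 + b, _⟩) ↔ _
    simp only [wallPre, gridGraph, Fin.ext_iff]
    omega

@[simp]
theorem wallPreShift_apply {h R : ℕ} (a b : ℕ) (ha : a + h ≤ R) (hb : b + 2 * h ≤ 2 * R)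
    (hab : a % 2 = b % 2) (v : Fin (h + 1) × Fin (2 * h + 2)) :
    wallPreShift a b ha hb hab v = (⟨v.1 + a, by omega⟩, ⟨v.2 + b, by omega⟩) := rfl

def wallBlock (h s : ℕ) (p : Fin s × Fin s) : wallPre h ↪g wallPre ((h + 1) * s) :=
  wallPreShift (p.1 * (h + 1)) (p.2 * (2 * h + 2) + p.1 * (h + 1) % 2)
    (by nlinarith [p.1.isLt]) (by nlinarith [p.2.isLt, Nat.mod_lt (p.1 * (h + 1)) two_pos])
    (by have : p.2 * (2 * h + 2) = 2 * (p.2 * (h + 1)) := by ring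
        omega)

theorem eq_of_wallBlock_apply_eq {h s : ℕ} {p q : Fin s × Fin s}
    {v w : Fin (h + 1) × Fin (2 * h + 2)} (hvw : wallBlock h s p v = wallBlock h s q w) :
    p = q := by
  simp only [wallBlock, wallPreShift_apply, Prod.mk.injEq, Fin.ext_iff] at hvw
  have hrow : p.1 = q.1 := Fin.ext (Nat.eq_of_add_mul_eq_add_mul v.1.isLt w.1.isLt hvw.1)
  rw [hrow] at hvw
  have hcol : p.2 = q.2 := Fin.ext <| Nat.eq_of_add_mul_eq_add_mul v.2.isLt w.2.isLt (by omega)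
  exact Prod.ext hrow hcol

theorem wall_contains_disjoint_walls_general (h k s : ℕ)
    (hs : s = if Nat.sqrt (k + 1) * Nat.sqrt (k + 1) = k + 1
      then Nat.sqrt (k + 1) else Nat.sqrt (k + 1) + 1) :
    ∃ f : Fin (k + 1) → (wallVerts h → wallVerts ((h + 1) * s)),
      (∀ i, Function.Injective (f i)) ∧
      (∀ i a b, (wallSimple h).Adj a b → (wallSimple ((h + 1) * s)).Adj (f i a) (f i b)) ∧
      (∀ i j, i ≠ j → ∀ a b, f i a ≠ f j b) := by
  have hks : k + 1 ≤ s * s := hs ▸ le_ceil_sqrt_mul_self (k + 1)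
  let block : Fin (k + 1) ↪ Fin s × Fin s :=
    (Fin.castLEEmb hks).trans finProdFinEquiv.symm.toEmbedding
  let copy (i : Fin (k + 1)) : wallSimple h →g wallSimple ((h + 1) * s) :=
    SimpleGraph.induceHom (wallBlock h s (block i)).toHom (mapsTo_wallVerts _)
  refine ⟨fun i => copy i, fun i => ?_, fun i a b hab => (copy i).map_adj hab, ?_⟩
  · exact SimpleGraph.induceHom_injective _ _ (wallBlock h s (block i)).injective.injOn
  · intro i j hij a b hab
    exact hij (block.injective (eq_of_wallBlock_apply_eq (congrArg Subtype.val hab)))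

/-- The wall of height `(h+1)·⌈√(k+1)⌉` contains `k+1` pairwise
vertex-disjoint subgraphs, each containing a copy of the wall of height `h`. -/
theorem wall_contains_disjoint_walls (h k s : ℕ) (hh : 1 ≤ h)
    (hs : s = if Nat.sqrt (k + 1) * Nat.sqrt (k + 1) = k + 1
      then Nat.sqrt (k + 1) else Nat.sqrt (k + 1) + 1) :
    ∃ f : Fin (k + 1) → (wallVerts h → wallVerts ((h + 1) * s)),
      (∀ i, Function.Injective (f i)) ∧
      (∀ i a b, (wallSimple h).Adj a b → (wallSimple ((h + 1) * s)).Adj (f i a) (f i b)) ∧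
      (∀ i j, i ≠ j → ∀ a b, f i a ≠ f j b) :=
  wall_contains_disjoint_walls_general h k s hs
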